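/- In the calculus with MP, IPC1, IPC2, and all instances of IPC0' ((A ⊃ Q) ⊃ (((A ⊃ B) ⊃ Q) ⊃ Q)) as axioms, every instance of the Peirce scheme IPC0 (((A ⊃ B) ⊃ A) ⊃ A) is a theorem. -/

import Mathlib

inductive Fm : Type
  | var : Nat → Fm
  | imp : Fm → Fm → Fm

inductive ThmQ : Fm → Prop
  | ipc1 (A B : Fm) : ThmQ (A.imp (B.imp A))
  | ipc2 (A B C : Fm) : ThmQ ((A.imp (B.imp C)).imp ((A.imp B).imp (A.imp C)))
  | ipc0' (A B Q : Fm) : ThmQ ((A.imp Q).imp (((A.imp B).imp Q).imp Q))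
  | mp {A B : Fm} : ThmQ (A.imp B) → ThmQ A → ThmQ B

theorem ThmQ.imp_self (A : Fm) : ThmQ (A.imp A) :=
  ThmQ.mp (ThmQ.mp (ThmQ.ipc2 A (A.imp A) A) (ThmQ.ipc1 A (A.imp A))) (ThmQ.ipc1 A A)

theorem stmt_4 (A B : Fm) : ThmQ (((A.imp B).imp A).imp A) :=
  ThmQ.mp (ThmQ.ipc0' A B A) (ThmQ.imp_self A)
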